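/- Let G = (P ∪ B, E) be a finite galactic graph, S, T ⊆ P with |S| = |T| = n and no black hole in N[S ∪ T], and let u, v ∈ B be two adjacent black holes. Let G' be obtained from G by contracting {u, v} to a single black hole b adjacent exactly to N({u,v}) ∖ {u,v}. Then there is a plan for Galactic 1IUMAPF from S to T in G if and only if there is a plan for Galactic 1IUMAPF from S to T in G'. -/

import Mathlib

open SimpleGraph

/-- A configuration of `n` agents is distance-`r` independent if distinct agents are
at graph distance at least `r + 1`. A plan for `rIUMAPF` of length `ℓ` from `S` to `T`:
the occupied sets at times `0` and `ℓ` are `S` and `T`, every configuration up to time `ℓ`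
is distance-`r` independent, and each agent moves within closed neighborhoods. -/
def IsPlan {V : Type*} (G : SimpleGraph V) (r n ℓ : ℕ) (Q : ℕ → Fin n → V)
    (S T : Set V) : Prop :=
  Set.range (Q 0) = S ∧ Set.range (Q ℓ) = T ∧
  (∀ k ≤ ℓ, ∀ i j : Fin n, i ≠ j → r + 1 ≤ G.dist (Q k i) (Q k j)) ∧
  (∀ k < ℓ, ∀ i : Fin n, Q (k + 1) i = Q k i ∨ G.Adj (Q k i) (Q (k + 1) i))

/-- Galactic distance-`r` independence: no two distinct agents on planets are within
distance `r` in the planet-induced subgraph (`edist = ⊤` when unreachable). -/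
def GalIndep {V : Type*} (G : SimpleGraph V) (P : Set V) (r : ℕ) {n : ℕ}
    (Q : Fin n → V) : Prop :=
  ∀ i j : Fin n, i ≠ j → ∀ (hi : Q i ∈ P) (hj : Q j ∈ P),
    (r : ℕ∞) < (G.induce P).edist ⟨Q i, hi⟩ ⟨Q j, hj⟩

/-- A plan for Galactic `rIUMAPF` from `S` to `T`. -/
def GalPlan {V : Type*} (G : SimpleGraph V) (P : Set V) (r n : ℕ)
    (S T : Set V) : Prop :=
  ∃ (ℓ : ℕ) (Q : ℕ → Fin n → V),
    Set.range (Q 0) = S ∧ Set.range (Q ℓ) = T ∧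
    (∀ k ≤ ℓ, GalIndep G P r (Q k)) ∧
    (∀ k < ℓ, ∀ i : Fin n, Q (k + 1) i = Q k i ∨ G.Adj (Q k i) (Q (k + 1) i))

/-- Closed neighborhood `N[X]` of a set of vertices. -/
def nclSet {V : Type*} (G : SimpleGraph V) (X : Set V) : Set V :=
  X ∪ {v | ∃ u ∈ X, G.Adj u v}

/-- Contraction of a vertex set `W` to a single new vertex (`Sum.inr ()`), which is
adjacent exactly to the vertices of `N(W) ∖ W`; everything else is unchanged. -/
def contractSet {V : Type*} (G : SimpleGraph V) (W : Set V) :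
    SimpleGraph ({v : V // v ∉ W} ⊕ Unit) where
  Adj x y :=
    match x, y with
    | Sum.inl u, Sum.inl v => G.Adj u.1 v.1
    | Sum.inl u, Sum.inr _ => ∃ w ∈ W, G.Adj u.1 w
    | Sum.inr _, Sum.inl v => ∃ w ∈ W, G.Adj v.1 w
    | Sum.inr _, Sum.inr _ => False
  symm := by
    constructor
    rintro (u | u) (v | v) h
    · exact h.symm
    · exact h
    · exact h
    · exact h
  loopless := by
    constructor
    rintro (u | u) h
    · exact G.irrefl h
    · exact h

/-- The planets of the contracted galactic graph: the surviving copies of planets. -/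
def contractPlanets {V : Type*} (P W : Set V) : Set ({v : V // v ∉ W} ⊕ Unit) :=
  {x | ∃ u : {v : V // v ∉ W}, u.1 ∈ P ∧ x = Sum.inl u}

/-- A subset of `V ∖ W` viewed inside the contracted vertex set. -/
def liftSet {V : Type*} (W X : Set V) : Set ({v : V // v ∉ W} ⊕ Unit) :=
  {x | ∃ u : {v : V // v ∉ W}, u.1 ∈ X ∧ x = Sum.inl u}

/-- The infinite grid graph on `ℤ × ℤ`: adjacency is unit `L1` distance. -/
def gridGraph : SimpleGraph (ℤ × ℤ) where
  Adj p q := |p.1 - q.1| + |p.2 - q.2| = 1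
  symm := by
    constructor
    intro p q h
    rw [abs_sub_comm q.1, abs_sub_comm q.2]
    exact h
  loopless := by
    constructor
    intro p h
    simp at h


/-!
Contracting a set `W` of black holes does not touch the planets, so the planet-induced
subgraphs before and after contraction are isomorphic and galactic independence is the same
on both sides. Projecting every agent to the contracted graph therefore turns a plan into a
plan. Conversely, if `W` is a clique (such as two adjacent black holes), each contracted step
is simulated by two steps of the original graph: an agent on the contracted black hole waits
at a fixed `w₀ ∈ W`, and enters or leaves `W` through a vertex of `W` adjacent to its
planet-side endpoint, which is one step away from `w₀`.
-/

namespace SimpleGraph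

variable {α β : Type*} {G : SimpleGraph α} {H : SimpleGraph β}

theorem Hom.edist_le (f : G →g H) (a b : α) : H.edist (f a) (f b) ≤ G.edist a b := by
  by_cases hab : G.Reachable a b
  · obtain ⟨p, hp⟩ := hab.exists_walk_length_eq_edist
    rw [← hp]
    simpa using (p.map f).edist_le
  · simp [edist_eq_top_of_not_reachable hab]

theorem Iso.edist_eq (φ : G ≃g H) (a b : α) : H.edist (φ a) (φ b) = G.edist a b :=
  le_antisymm (φ.toHom.edist_le a b) (by simpa using φ.symm.toHom.edist_le (φ a) (φ b))

theorem IsClique.eq_or_adj {s : Set α} (hs : G.IsClique s) {x y : α} (hx : x ∈ s)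
    (hy : y ∈ s) : y = x ∨ G.Adj x y :=
  or_iff_not_imp_left.2 fun hne => hs hx hy (Ne.symm hne)

end SimpleGraph

section Plans

variable {V : Type*} {G : SimpleGraph V} {P : Set V} {r n : ℕ}

theorem GalIndep.of_eq_on_planets {A B : Fin n → V} (hB : GalIndep G P r B)
    (hAB : ∀ i, A i ∈ P → A i = B i) : GalIndep G P r A := by
  intro i j hij hi hj
  have hi' : (⟨A i, hi⟩ : P) = ⟨B i, hAB i hi ▸ hi⟩ := Subtype.ext (hAB i hi)
  have hj' : (⟨A j, hj⟩ : P) = ⟨B j, hAB j hj ▸ hj⟩ := Subtype.ext (hAB j hj)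
  rw [hi', hj']
  exact hB i j hij _ _

theorem galPlan_of_interleave {S T : Set V} {ℓ : ℕ} (E O : ℕ → Fin n → V)
    (hS : Set.range (E 0) = S) (hT : Set.range (E ℓ) = T)
    (hE : ∀ m ≤ ℓ, GalIndep G P r (E m)) (hO : ∀ m < ℓ, GalIndep G P r (O m))
    (hEO : ∀ m < ℓ, ∀ i, O m i = E m i ∨ G.Adj (E m i) (O m i))
    (hOE : ∀ m < ℓ, ∀ i, E (m + 1) i = O m i ∨ G.Adj (O m i) (E (m + 1) i)) :
    GalPlan G P r n S T := by
  set Q : ℕ → Fin n → V := fun k => if Even k then E (k / 2) else O (k / 2)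
  have hQ_even (m : ℕ) : Q (2 * m) = E m := by simp [Q]
  have hQ_odd (m : ℕ) : Q (2 * m + 1) = O m := by simp [Q, Nat.add_div]
  refine ⟨2 * ℓ, Q, by simpa [hQ_even 0] using hS, by rwa [hQ_even], ?_, ?_⟩
  · intro k hk
    obtain ⟨m, rfl | rfl⟩ := Nat.even_or_odd' k
    · exact hQ_even m ▸ hE m (by omega)
    · exact hQ_odd m ▸ hO m (by omega)
  · intro k hk i
    obtain ⟨m, rfl | rfl⟩ := Nat.even_or_odd' k
    · rw [hQ_even, hQ_odd]
      exact hEO m (by omega) i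
    · rw [hQ_odd, show 2 * m + 1 + 1 = 2 * (m + 1) by ring, hQ_even]
      exact hOE m (by omega) i

end Plans

section Contraction

variable {V : Type*} {G : SimpleGraph V} {P W : Set V} {r n : ℕ}

open Classical in
noncomputable def contractVertex (W : Set V) (x : V) : {v : V // v ∉ W} ⊕ Unit :=
  if h : x ∈ W then .inr () else .inl ⟨x, h⟩

theorem contractVertex_of_mem {x : V} (h : x ∈ W) : contractVertex W x = .inr () :=
  dif_pos h

theorem contractVertex_of_notMem {x : V} (h : x ∉ W) : contractVertex W x = .inl ⟨x, h⟩ :=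
  dif_neg h

theorem contractVertex_mem_contractPlanets_iff (hPW : Disjoint P W) {x : V} :
    contractVertex W x ∈ contractPlanets P W ↔ x ∈ P := by
  by_cases hx : x ∈ W
  · simp [contractVertex_of_mem hx, contractPlanets, Set.disjoint_right.1 hPW hx]
  · simp [contractVertex_of_notMem hx, contractPlanets, hx]

theorem image_contractVertex {X : Set V} (hXW : Disjoint X W) :
    contractVertex W '' X = liftSet W X := by
  ext y
  constructor
  · rintro ⟨x, hx, rfl⟩
    have hxW := Set.disjoint_left.1 hXW hx
    exact ⟨⟨x, hxW⟩, hx, contractVertex_of_notMem hxW⟩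
  · rintro ⟨w, hw, rfl⟩
    exact ⟨w, hw, contractVertex_of_notMem w.2⟩

theorem contractVertex_move {x y : V} (h : y = x ∨ G.Adj x y) :
    contractVertex W y = contractVertex W x ∨
      (contractSet G W).Adj (contractVertex W x) (contractVertex W y) := by
  obtain rfl | hxy := h
  · exact .inl rfl
  by_cases hx : x ∈ W <;> by_cases hy : y ∈ W
  · simp [contractVertex_of_mem hx, contractVertex_of_mem hy]
  · simp only [contractVertex_of_mem hx, contractVertex_of_notMem hy]
    exact .inr ⟨x, hx, hxy.symm⟩
  · simp only [contractVertex_of_notMem hx, contractVertex_of_mem hy]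
    exact .inr ⟨y, hy, hxy⟩
  · simp only [contractVertex_of_notMem hx, contractVertex_of_notMem hy]
    exact .inr hxy

variable (G) in
noncomputable def contractPlanetsIso (hPW : Disjoint P W) :
    G.induce P ≃g (contractSet G W).induce (contractPlanets P W) where
  toEquiv := Equiv.ofBijective
    (fun x => ⟨contractVertex W x, (contractVertex_mem_contractPlanets_iff hPW).2 x.2⟩) <| by
      constructor
      · intro x y hxy
        simpa [contractVertex_of_notMem (Set.disjoint_left.1 hPW x.2),
          contractVertex_of_notMem (Set.disjoint_left.1 hPW y.2), Subtype.ext_iff] using hxy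
      · rintro ⟨_, w, hw, rfl⟩
        exact ⟨⟨w, hw⟩, Subtype.ext (contractVertex_of_notMem w.2)⟩
  map_rel_iff' {x y} := by
    show (contractSet G W).Adj (contractVertex W x) (contractVertex W y) ↔ G.Adj x y
    rw [contractVertex_of_notMem (Set.disjoint_left.1 hPW x.2),
      contractVertex_of_notMem (Set.disjoint_left.1 hPW y.2)]
    rfl

theorem galIndep_contractVertex_comp_iff (hPW : Disjoint P W) (A : Fin n → V) :
    GalIndep (contractSet G W) (contractPlanets P W) r (contractVertex W ∘ A) ↔
      GalIndep G P r A := by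
  have hmem {x : V} := contractVertex_mem_contractPlanets_iff (x := x) hPW
  have hdist (i j : Fin n) (hi : A i ∈ P) (hj : A j ∈ P) :
      ((contractSet G W).induce (contractPlanets P W)).edist
        ⟨contractVertex W (A i), hmem.2 hi⟩ ⟨contractVertex W (A j), hmem.2 hj⟩ =
      (G.induce P).edist ⟨A i, hi⟩ ⟨A j, hj⟩ :=
    (contractPlanetsIso G hPW).edist_eq ⟨A i, hi⟩ ⟨A j, hj⟩
  constructor
  · intro h i j hij hi hj
    rw [← hdist]
    exact h i j hij _ _
  · intro h i j hij hi hj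
    exact hdist i j (hmem.1 hi) (hmem.1 hj) ▸ h i j hij _ _

theorem GalPlan.contract {S T : Set V} (hPW : Disjoint P W) (hSW : Disjoint S W)
    (hTW : Disjoint T W) (h : GalPlan G P r n S T) :
    GalPlan (contractSet G W) (contractPlanets P W) r n (liftSet W S) (liftSet W T) := by
  obtain ⟨ℓ, Q, hS, hT, hindep, hmove⟩ := h
  refine ⟨ℓ, fun k => contractVertex W ∘ Q k, ?_, ?_,
    fun k hk => (galIndep_contractVertex_comp_iff hPW _).2 (hindep k hk),
    fun k hk i => contractVertex_move (hmove k hk i)⟩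
  · rw [Set.range_comp, hS, image_contractVertex hSW]
  · rw [Set.range_comp, hT, image_contractVertex hTW]

variable (W) in
def contractSection (w₀ : V) : {v : V // v ∉ W} ⊕ Unit → V :=
  Sum.elim Subtype.val fun _ => w₀

theorem contractVertex_comp_contractSection {w₀ : V} (hw₀ : w₀ ∈ W) :
    contractVertex W ∘ contractSection W w₀ = id := by
  funext y
  rcases y with w | ⟨⟩
  · exact contractVertex_of_notMem w.2
  · exact contractVertex_of_mem hw₀

theorem image_contractSection_liftSet {X : Set V} (hXW : Disjoint X W) (w₀ : V) :
    contractSection W w₀ '' liftSet W X = X := by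
  rw [← image_contractVertex hXW, Set.image_image]
  refine Set.EqOn.image_eq_self fun x hx => ?_
  simp [contractVertex_of_notMem (Set.disjoint_left.1 hXW hx), contractSection]

variable (G W) in
open Classical in
noncomputable def contractGate (w₀ x : V) : V :=
  if h : ∃ y ∈ W, G.Adj x y then h.choose else w₀

theorem contractGate_mem {w₀ : V} (hw₀ : w₀ ∈ W) (x : V) :
    contractGate G W w₀ x ∈ W := by
  unfold contractGate
  split_ifs with h
  exacts [h.choose_spec.1, hw₀]

theorem adj_contractGate {w₀ x : V} (h : ∃ y ∈ W, G.Adj x y) :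
    G.Adj x (contractGate G W w₀ x) := by
  rw [contractGate, dif_pos h]
  exact h.choose_spec.2

variable (G W) in
/-- The position at the odd time inserted between two consecutive contracted configurations. -/
noncomputable def contractMid (w₀ : V) :
    {v : V // v ∉ W} ⊕ Unit → {v : V // v ∉ W} ⊕ Unit → V
  | .inl _, .inl w' => w'
  | .inl w, .inr _ => contractGate G W w₀ w
  | .inr _, .inl w' => contractGate G W w₀ w'
  | .inr _, .inr _ => w₀

theorem contractMid_eq_of_mem {w₀ : V} (hPW : Disjoint P W) (hw₀ : w₀ ∈ W)
    {a b : {v : V // v ∉ W} ⊕ Unit} (h : contractMid G W w₀ a b ∈ P) :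
    contractMid G W w₀ a b = contractSection W w₀ b := by
  have hW (x : V) (hx : x ∈ W) : x ∉ P := Set.disjoint_right.1 hPW hx
  rcases a with w | ⟨⟩ <;> rcases b with w' | ⟨⟩
  · rfl
  · exact absurd h (hW _ (contractGate_mem hw₀ _))
  · exact absurd h (hW _ (contractGate_mem hw₀ _))
  · rfl

theorem contractMid_move_left {w₀ : V} (hW : G.IsClique W) (hw₀ : w₀ ∈ W)
    {a b : {v : V // v ∉ W} ⊕ Unit} (hab : b = a ∨ (contractSet G W).Adj a b) :
    contractMid G W w₀ a b = contractSection W w₀ a ∨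
      G.Adj (contractSection W w₀ a) (contractMid G W w₀ a b) := by
  rcases a with w | ⟨⟩ <;> rcases b with w' | ⟨⟩
  · rcases hab with hab | hab
    · exact .inl (congrArg Subtype.val (Sum.inl.inj hab))
    · exact .inr hab
  · exact .inr (adj_contractGate (hab.resolve_left Sum.inr_ne_inl))
  · exact hW.eq_or_adj hw₀ (contractGate_mem hw₀ _)
  · exact .inl rfl

theorem contractMid_move_right {w₀ : V} (hW : G.IsClique W) (hw₀ : w₀ ∈ W)
    {a b : {v : V // v ∉ W} ⊕ Unit} (hab : b = a ∨ (contractSet G W).Adj a b) :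
    contractSection W w₀ b = contractMid G W w₀ a b ∨
      G.Adj (contractMid G W w₀ a b) (contractSection W w₀ b) := by
  rcases a with w | ⟨⟩ <;> rcases b with w' | ⟨⟩
  · exact .inl rfl
  · exact hW.eq_or_adj (contractGate_mem hw₀ _) hw₀
  · exact .inr (adj_contractGate (hab.resolve_left Sum.inl_ne_inr)).symm
  · exact .inl rfl

theorem GalPlan.of_contract {S T : Set V} {w₀ : V} (hPW : Disjoint P W) (hW : G.IsClique W)
    (hw₀ : w₀ ∈ W) (hSW : Disjoint S W) (hTW : Disjoint T W)
    (h : GalPlan (contractSet G W) (contractPlanets P W) r n (liftSet W S) (liftSet W T)) :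
    GalPlan G P r n S T := by
  obtain ⟨ℓ, Q, hS, hT, hindep, hmove⟩ := h
  have hsection (m : ℕ) (hm : m ≤ ℓ) : GalIndep G P r (contractSection W w₀ ∘ Q m) := by
    rw [← galIndep_contractVertex_comp_iff hPW, ← Function.comp_assoc,
      contractVertex_comp_contractSection hw₀]
    exact hindep m hm
  refine galPlan_of_interleave (fun m => contractSection W w₀ ∘ Q m)
    (fun m i => contractMid G W w₀ (Q m i) (Q (m + 1) i)) ?_ ?_ hsection
    (fun m hm => (hsection (m + 1) hm).of_eq_on_planets fun i => contractMid_eq_of_mem hPW hw₀)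
    (fun m hm i => contractMid_move_left hW hw₀ (hmove m hm i))
    (fun m hm i => contractMid_move_right hW hw₀ (hmove m hm i))
  · rw [Set.range_comp, hS, image_contractSection_liftSet hSW]
  · rw [Set.range_comp, hT, image_contractSection_liftSet hTW]

end Contraction

theorem contract_adjacent_blackholes_iff_general {V : Type*} (G : SimpleGraph V)
    (P : Set V) (n : ℕ) (S T : Set V) (hSP : S ⊆ P) (hTP : T ⊆ P)
    (u v : V) (hu : u ∉ P) (hv : v ∉ P) (huv : G.Adj u v) :
    GalPlan G P 1 n S T ↔
      GalPlan (contractSet G ({u, v} : Set V)) (contractPlanets P ({u, v} : Set V)) 1 n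
        (liftSet ({u, v} : Set V) S) (liftSet ({u, v} : Set V) T) := by
  have hPW : Disjoint P {u, v} :=
    Set.disjoint_right.2 <| by rintro _ (rfl | rfl) <;> assumption
  have hW : G.IsClique {u, v} := isClique_pair.2 fun _ => huv
  exact ⟨GalPlan.contract hPW (hPW.mono_left hSP) (hPW.mono_left hTP),
    GalPlan.of_contract hPW hW (Set.mem_insert u _) (hPW.mono_left hSP) (hPW.mono_left hTP)⟩

/-- contracting two adjacent black holes to a single black hole preserves
the existence of a plan for Galactic 1IUMAPF (in both directions). -/
theorem contract_adjacent_blackholes_iff {V : Type*} [Fintype V] (G : SimpleGraph V)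
    (P : Set V) (n : ℕ) (S T : Set V) (hSP : S ⊆ P) (hTP : T ⊆ P)
    (hS : S.ncard = n) (hT : T.ncard = n)
    (hbh : nclSet G (S ∪ T) ⊆ P)
    (u v : V) (hu : u ∉ P) (hv : v ∉ P) (huv : G.Adj u v) :
    GalPlan G P 1 n S T ↔
      GalPlan (contractSet G ({u, v} : Set V)) (contractPlanets P ({u, v} : Set V)) 1 n
        (liftSet ({u, v} : Set V) S) (liftSet ({u, v} : Set V) T) :=
  contract_adjacent_blackholes_iff_general G P n S T hSP hTP u v hu hv huv
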